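/- Let the strategy profile (M, r) of the Mafia Hitting Set Game be a pure Nash equilibrium. Then there are no protected mafiosi, i.e., D(v) ≤ c(v) for every v ∈ M. -/

import Mathlib

/-!
Suppose some mafioso is protected and let `P` be the set of protected mafiosi. If every
mafioso paying a positive ransom into a club that meets `P` belonged to `P`, double counting
the ransoms over the clubs would give `∑_{p ∈ P} D(p) ≤ ∑_{p ∈ P} c(p)`, which is absurd.
So some unprotected mafioso `m` pays a positive ransom into a club `S₀` containing a protected
`u ≠ m`. Since `u` reimburses only the fraction `c(u)/D(u) < 1` of a claim, this ransom earns
`m` less than it costs, and `F⁺(m) < c(m)`. If `m` is the only mafioso of some club `S₁`,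
moving the ransom from `S₀` to `S₁`, where claims are reimbursed in full, raises `F⁺(m)`
(the other mafiosi's demands can only drop, so their reimbursement rates only rise). Otherwise
`m` can become a civilian without penalty and pay `D(m)` instead of
`c(m) - F⁺(m) + D(m) > D(m)`. Either way `m` has a profitable deviation.
-/
open Finset
open scoped Classical

namespace MafiaHS

variable {V : Type*} [Fintype V] [DecidableEq V]

noncomputable section

/-- The demand `D(v) = (1/(d-1)) ∑_{S ∋ v} ∑_{m ∈ (M∩S)∖{v}} r(m,S)` asked from agent `v`
in the Mafia Hitting Set Game. -/
def demand (d : ℕ) (E : Finset (Finset V)) (M : Finset V)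
    (r : V → Finset V → ℝ) (v : V) : ℝ :=
  (1 / ((d : ℝ) - 1)) * ∑ S ∈ E.filter (fun S => v ∈ S), ∑ m ∈ (M ∩ S).erase v, r m S

/-- A valid strategy profile of the Mafia Hitting Set Game: ransoms are nonnegative,
`r m S = 0` unless `m` is a mafioso belonging to the club `S ∈ 𝓔`, and every mafioso `m`
distributes exactly `c m` among the clubs containing him. -/
def ValidProfile (E : Finset (Finset V)) (c : V → ℝ)
    (M : Finset V) (r : V → Finset V → ℝ) : Prop :=
  (∀ m S, 0 ≤ r m S) ∧
  (∀ m S, m ∉ M ∨ m ∉ S ∨ S ∉ E → r m S = 0) ∧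
  (∀ m ∈ M, ∑ S ∈ E.filter (fun S => m ∈ S), r m S = c m)

/-- Utility of agent `v` in the Mafia Hitting Set Game.  A mafioso gets
`-c v + F⁺(v) - F⁻(v)` with `F⁻(v) = min(D v, c v)` and
`F⁺(v) = ∑_{S ∋ v} (r(v,S)/(d-1))·(|S∖(P∪{v})| + ∑_{u∈(S∩P)∖{v}} c u / D u)`,
where `P = {u ∈ M : D u > c u}` is the set of protected mafiosi.
A civilian gets `-D v` minus the penalty `T` if he belongs to an uncovered club. -/
def utility (d : ℕ) (E : Finset (Finset V)) (c : V → ℝ) (T : ℝ)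
    (M : Finset V) (r : V → Finset V → ℝ) (v : V) : ℝ :=
  if v ∈ M then
    -c v +
      (∑ S ∈ E.filter (fun S => v ∈ S),
        (r v S / ((d : ℝ) - 1)) *
          ((((S.filter fun u => ¬(u ∈ M ∧ c u < demand d E M r u)).erase v).card : ℝ) +
            ∑ u ∈ (S.filter fun u => u ∈ M ∧ c u < demand d E M r u).erase v,
              c u / demand d E M r u)) -
      min (demand d E M r v) (c v)
  else
    -demand d E M r v - (if ∃ S ∈ E, v ∈ S ∧ M ∩ S = ∅ then T else 0)

/-- `(M', r')` is a unilateral deviation of agent `v` from `(M, r)`: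
all other agents keep their strategies. -/
def Deviation (v : V) (M M' : Finset V) (r r' : V → Finset V → ℝ) : Prop :=
  (∀ u, u ≠ v → (u ∈ M' ↔ u ∈ M)) ∧ ∀ u S, u ≠ v → r' u S = r u S

/-- `(M, r)` is a pure Nash equilibrium of the Mafia Hitting Set Game: a valid profile such
that no agent can strictly increase his utility by a unilateral deviation. -/
def IsNashEq (d : ℕ) (E : Finset (Finset V)) (c : V → ℝ) (T : ℝ)
    (M : Finset V) (r : V → Finset V → ℝ) : Prop :=
  ValidProfile E c M r ∧
  ∀ (v : V) (M' : Finset V) (r' : V → Finset V → ℝ),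
    ValidProfile E c M' r' → Deviation v M M' r r' →
      utility d E c T M' r' v ≤ utility d E c T M r v

set_option linter.unusedSectionVars false

theorem sum_sum_erase {ι R : Type*} [DecidableEq ι] [CommRing R] (A : Finset ι) (f : ι → R) :
    ∑ p ∈ A, ∑ m ∈ A.erase p, f m = (#A - 1) * ∑ m ∈ A, f m := by
  rw [sum_congr rfl fun p hp => sum_erase_eq_sub (f := f) hp, sum_sub_distrib, sum_const,
    nsmul_eq_mul]
  ring

theorem sum_sum_filter_mem_comm {α β : Type*} [DecidableEq α] [AddCommMonoid β]
    (P : Finset α) (E : Finset (Finset α)) (g : α → Finset α → β) :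
    ∑ p ∈ P, ∑ S ∈ E.filter (fun S => p ∈ S), g p S = ∑ S ∈ E, ∑ p ∈ P ∩ S, g p S :=
  sum_comm' fun p S => by simp only [mem_filter, mem_inter]; tauto

section

variable {d : ℕ} {E : Finset (Finset V)} {c : V → ℝ} {T : ℝ} {M M' : Finset V}
  {r r' : V → Finset V → ℝ}

theorem sub_one_mul_demand (hd : 2 ≤ d) (v : V) :
    ((d : ℝ) - 1) * demand d E M r v
      = ∑ S ∈ E.filter (fun S => v ∈ S), ∑ m ∈ (M ∩ S).erase v, r m S := by
  have : (1 : ℝ) < d := by exact_mod_cast hd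
  rw [demand, ← mul_assoc, mul_one_div_cancel (by linarith), one_mul]

theorem demand_le_demand (hd : 2 ≤ d) {v : V}
    (hr : ∀ m S, v ∈ S → r' m S ≤ r m S) :
    demand d E M r' v ≤ demand d E M r v := by
  have : (1 : ℝ) < d := by exact_mod_cast hd
  refine mul_le_mul_of_nonneg_left (sum_le_sum fun S hS => sum_le_sum fun m hm => ?_)
    (by positivity)
  exact hr m S (mem_filter.mp hS).2

theorem Deviation.demand_eq {v : V} (h : Deviation v M M' r r') :
    demand d E M' r' v = demand d E M r v := by
  unfold demand
  congr 1
  refine sum_congr rfl fun S _ => ?_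
  have hset : (M' ∩ S).erase v = (M ∩ S).erase v := by
    ext u
    simp only [mem_erase, mem_inter]
    exact and_congr_right fun hu => and_congr_left fun _ => h.1 u hu
  rw [hset]
  exact sum_congr rfl fun u hu => h.2 u S (ne_of_mem_erase hu)

theorem Deviation.update {v : V} {g : Finset V → ℝ} (hM : ∀ u, u ≠ v → (u ∈ M' ↔ u ∈ M)) :
    Deviation v M M' r (Function.update r v g) :=
  ⟨hM, fun u S hu => by rw [Function.update_of_ne hu]⟩

theorem ValidProfile.mem_of_pos (h : ValidProfile E c M r) {m : V} {S : Finset V}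
    (hpos : 0 < r m S) : m ∈ M ∧ m ∈ S ∧ S ∈ E := by
  by_contra hnot
  have : m ∉ M ∨ m ∉ S ∨ S ∉ E := by tauto
  exact hpos.ne' (h.2.1 m S this)

theorem ValidProfile.update (h : ValidProfile E c M r) {v : V} {g : Finset V → ℝ}
    (hM : ∀ u, u ≠ v → (u ∈ M' ↔ u ∈ M)) (hg : ∀ S, 0 ≤ g S)
    (hgz : ∀ S, v ∉ M' ∨ v ∉ S ∨ S ∉ E → g S = 0)
    (hgsum : v ∈ M' → ∑ S ∈ E.filter (fun S => v ∈ S), g S = c v) :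
    ValidProfile E c M' (Function.update r v g) := by
  obtain ⟨h0, hz, hsum⟩ := h
  refine ⟨fun u S => ?_, fun u S hu => ?_, fun u hu => ?_⟩ <;>
    rcases eq_or_ne u v with rfl | huv
  · simpa using hg S
  · simpa [Function.update_of_ne huv] using h0 u S
  · simpa using hgz S hu
  · rw [Function.update_of_ne huv]
    exact hz u S (by rwa [hM u huv] at hu)
  · simpa using hgsum hu
  · simp only [Function.update_of_ne huv]
    exact hsum u ((hM u huv).mp hu)

theorem ValidProfile.sum_demand_le_sum_cost (h : ValidProfile E c M r) (hd : 2 ≤ d)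
    (hunif : ∀ S ∈ E, #S = d) {P : Finset V} (hPM : P ⊆ M)
    (hP : ∀ m S, 0 < r m S → ∀ p ∈ P ∩ S, p ≠ m → m ∈ P) :
    ∑ p ∈ P, demand d E M r p ≤ ∑ p ∈ P, c p := by
  have hK : (0 : ℝ) < d - 1 := by linarith [show (2 : ℝ) ≤ d by exact_mod_cast hd]
  have hclub : ∀ S ∈ E, ∑ p ∈ P ∩ S, ∑ m ∈ (M ∩ S).erase p, r m S
      ≤ ((d : ℝ) - 1) * ∑ m ∈ P ∩ S, r m S := fun S hS => by
    have hzero : ∀ p ∈ P ∩ S, ∀ m ∈ (M ∩ S).erase p, m ∉ (P ∩ S).erase p → r m S = 0 := by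
      intro p hp m hm hmP
      obtain ⟨hmp, hmM, hmS⟩ := by simpa only [mem_erase, mem_inter] using hm
      refine le_antisymm (not_lt.mp fun hpos => hmP ?_) (h.1 m S)
      exact mem_erase.mpr ⟨hmp, mem_inter.mpr ⟨hP m S hpos p hp (Ne.symm hmp), hmS⟩⟩
    have hcard : ((#(P ∩ S) : ℕ) : ℝ) ≤ d := by
      exact_mod_cast hunif S hS ▸ card_le_card inter_subset_right
    calc ∑ p ∈ P ∩ S, ∑ m ∈ (M ∩ S).erase p, r m S
        = ∑ p ∈ P ∩ S, ∑ m ∈ (P ∩ S).erase p, r m S := sum_congr rfl fun p hp =>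
          (sum_subset (erase_subset_erase p (inter_subset_inter_right hPM)) (hzero p hp)).symm
      _ = (#(P ∩ S) - 1) * ∑ m ∈ P ∩ S, r m S := sum_sum_erase _ _
      _ ≤ ((d : ℝ) - 1) * ∑ m ∈ P ∩ S, r m S :=
          mul_le_mul_of_nonneg_right (by linarith) (sum_nonneg fun m _ => h.1 m S)
  refine le_of_mul_le_mul_left ?_ hK
  calc ((d : ℝ) - 1) * ∑ p ∈ P, demand d E M r p
      = ∑ S ∈ E, ∑ p ∈ P ∩ S, ∑ m ∈ (M ∩ S).erase p, r m S := by
        rw [mul_sum, sum_congr rfl fun p _ => sub_one_mul_demand hd p, sum_sum_filter_mem_comm]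
    _ ≤ ∑ S ∈ E, ((d : ℝ) - 1) * ∑ m ∈ P ∩ S, r m S := sum_le_sum hclub
    _ = ((d : ℝ) - 1) * ∑ p ∈ P, c p := by
        rw [← mul_sum, ← sum_sum_filter_mem_comm,
          sum_congr rfl fun p hp => h.2.2 p (hPM hp)]

theorem ValidProfile.exists_unprotected_payer (h : ValidProfile E c M r) (hd : 2 ≤ d)
    (hunif : ∀ S ∈ E, #S = d) {v : V} (hvM : v ∈ M) (hv : c v < demand d E M r v) :
    ∃ m, demand d E M r m ≤ c m ∧ ∃ S, 0 < r m S ∧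
      ∃ u ∈ S, u ≠ m ∧ u ∈ M ∧ c u < demand d E M r u := by
  by_contra! hno
  set P := M.filter fun u => c u < demand d E M r u
  have hclosed : ∀ m S, 0 < r m S → ∀ p ∈ P ∩ S, p ≠ m → m ∈ P := by
    intro m S hpos p hp hpm
    obtain ⟨hpP, hpS⟩ := mem_inter.mp hp
    refine mem_filter.mpr ⟨(h.mem_of_pos hpos).1, not_le.mp fun hm => ?_⟩
    exact (hno m hm S hpos p hpS hpm (mem_filter.mp hpP).1).not_gt (mem_filter.mp hpP).2
  refine (h.sum_demand_le_sum_cost hd hunif (filter_subset _ M) hclosed).not_gt ?_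
  exact sum_lt_sum_of_nonempty ⟨v, mem_filter.mpr ⟨hvM, hv⟩⟩ fun p hp => (mem_filter.mp hp).2

/-- The fraction of a claim that agent `u` actually reimburses: a protected mafioso `u` can pay
only `c u` out of the demand `D u` placed on him, everybody else pays claims in full. -/
def weight (d : ℕ) (E : Finset (Finset V)) (c : V → ℝ) (M : Finset V)
    (r : V → Finset V → ℝ) (u : V) : ℝ :=
  if u ∈ M ∧ c u < demand d E M r u then c u / demand d E M r u else 1

/-- What a unit of ransom placed by `v` on the club `S` earns back. -/
def clubWeight (d : ℕ) (E : Finset (Finset V)) (c : V → ℝ) (M : Finset V)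
    (r : V → Finset V → ℝ) (v : V) (S : Finset V) : ℝ :=
  (∑ u ∈ S.erase v, weight d E c M r u) / ((d : ℝ) - 1)

/-- The paper's `F⁺(v)`, see `utility_of_mem`. -/
def income (d : ℕ) (E : Finset (Finset V)) (c : V → ℝ) (M : Finset V)
    (r : V → Finset V → ℝ) (v : V) : ℝ :=
  ∑ S ∈ E.filter (fun S => v ∈ S), r v S * clubWeight d E c M r v S

theorem utility_of_mem {v : V} (hv : v ∈ M) :
    utility d E c T M r v = -c v + income d E c M r v - min (demand d E M r v) (c v) := by
  rw [utility, if_pos hv, income]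
  congr 2
  refine sum_congr rfl fun S _ => ?_
  rw [clubWeight, mul_div_assoc', div_mul_eq_mul_div]
  congr 2
  simp only [weight]
  rw [sum_ite, filter_erase, filter_erase, sum_const, nsmul_one]
  ring

theorem weight_le_one {u : V} (hc : 0 ≤ c u) : weight d E c M r u ≤ 1 := by
  unfold weight
  split_ifs with h
  · exact div_le_one_of_le₀ h.2.le (hc.trans h.2.le)
  · exact le_rfl

theorem weight_lt_one {u : V} (huM : u ∈ M) (hc : 0 ≤ c u) (hu : c u < demand d E M r u) :
    weight d E c M r u < 1 := by
  rw [weight, if_pos ⟨huM, hu⟩]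
  exact (div_lt_one (hc.trans_lt hu)).mpr hu

theorem weight_le_weight {u : V} (hc : 0 ≤ c u)
    (h : u ∈ M → demand d E M r' u ≤ demand d E M r u) :
    weight d E c M r u ≤ weight d E c M r' u := by
  by_cases h' : u ∈ M ∧ c u < demand d E M r' u
  · have hle := h h'.1
    rw [weight, weight, if_pos ⟨h'.1, h'.2.trans_le hle⟩, if_pos h']
    exact div_le_div_of_nonneg_left hc (hc.trans_lt h'.2) hle
  · have h1 : weight d E c M r' u = 1 := if_neg h'
    exact h1 ▸ weight_le_one hc

theorem cast_card_erase {S : Finset V} {v : V} (hS : #S = d) (hv : v ∈ S) (hd : 1 ≤ d) :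
    ((#(S.erase v) : ℕ) : ℝ) = d - 1 := by
  rw [card_erase_of_mem hv, hS, Nat.cast_sub hd, Nat.cast_one]

theorem clubWeight_le_one (hd : 2 ≤ d) (hc : ∀ u, 0 ≤ c u) {S : Finset V} {v : V}
    (hS : #S = d) (hv : v ∈ S) : clubWeight d E c M r v S ≤ 1 := by
  have : (1 : ℝ) < d := by exact_mod_cast hd
  rw [clubWeight, div_le_one (by linarith), ← cast_card_erase hS hv (by omega), ← nsmul_one]
  exact sum_le_card_nsmul _ _ _ fun u _ => weight_le_one (hc u)

theorem clubWeight_lt_one (hd : 2 ≤ d) (hc : ∀ u, 0 ≤ c u) {S : Finset V} {v u : V}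
    (hS : #S = d) (hv : v ∈ S) (huS : u ∈ S) (huv : u ≠ v) (huM : u ∈ M)
    (hu : c u < demand d E M r u) : clubWeight d E c M r v S < 1 := by
  have : (1 : ℝ) < d := by exact_mod_cast hd
  rw [clubWeight, div_lt_one (by linarith), ← cast_card_erase hS hv (by omega), ← nsmul_one,
    ← sum_const]
  exact sum_lt_sum (fun w _ => weight_le_one (hc w))
    ⟨u, mem_erase.mpr ⟨huv, huS⟩, weight_lt_one huM (hc u) hu⟩

theorem clubWeight_eq_one (hd : 2 ≤ d) {S : Finset V} {v : V} (hS : #S = d) (hv : v ∈ S)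
    (hsole : ∀ u ∈ S, u ∈ M → u = v) : clubWeight d E c M r v S = 1 := by
  have : (1 : ℝ) < d := by exact_mod_cast hd
  have hw : ∀ u ∈ S.erase v, weight d E c M r u = 1 := fun u hu => by
    rw [weight, if_neg fun h => ne_of_mem_erase hu (hsole u (mem_of_mem_erase hu) h.1)]
  rw [clubWeight, sum_congr rfl hw, sum_const, nsmul_one, cast_card_erase hS hv (by omega),
    div_self (by linarith)]

theorem clubWeight_le_clubWeight (hd : 2 ≤ d) (hc : ∀ u, 0 ≤ c u) {S : Finset V} {v : V}
    (h : ∀ u ∈ S, u ≠ v → u ∈ M → demand d E M r' u ≤ demand d E M r u) :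
    clubWeight d E c M r v S ≤ clubWeight d E c M r' v S := by
  have : (1 : ℝ) < d := by exact_mod_cast hd
  refine div_le_div_of_nonneg_right (sum_le_sum fun u hu => ?_) (by linarith)
  exact weight_le_weight (hc u) (h u (mem_of_mem_erase hu) (ne_of_mem_erase hu))

theorem ValidProfile.income_lt_cost (h : ValidProfile E c M r) (hd : 2 ≤ d)
    (hunif : ∀ S ∈ E, #S = d) (hc : ∀ u, 0 ≤ c u) {m : V} {S₀ : Finset V}
    (hpos : 0 < r m S₀) (hS₀ : clubWeight d E c M r m S₀ < 1) :
    income d E c M r m < c m := by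
  obtain ⟨hm, hmS₀, hS₀E⟩ := h.mem_of_pos hpos
  rw [income, ← h.2.2 m hm]
  refine sum_lt_sum (fun S hS => ?_)
    ⟨S₀, mem_filter.mpr ⟨hS₀E, hmS₀⟩, mul_lt_of_lt_one_right hpos hS₀⟩
  obtain ⟨hSE, hmS⟩ := mem_filter.mp hS
  exact mul_le_of_le_one_right (h.1 m S) (clubWeight_le_one hd hc (hunif S hSE) hmS)

def movedRow (r : V → Finset V → ℝ) (m : V) (S₀ S₁ : Finset V) (S : Finset V) : ℝ :=
  r m S + (if S = S₁ then r m S₀ else 0) - (if S = S₀ then r m S₀ else 0)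

theorem sum_movedRow_mul (r : V → Finset V → ℝ) (m : V) {S₀ S₁ : Finset V}
    {A : Finset (Finset V)} (hS₀ : S₀ ∈ A) (hS₁ : S₁ ∈ A) (g : Finset V → ℝ) :
    ∑ S ∈ A, movedRow r m S₀ S₁ S * g S = ∑ S ∈ A, r m S * g S + r m S₀ * (g S₁ - g S₀) := by
  simp only [movedRow, add_mul, sub_mul, ite_mul, zero_mul, sum_add_distrib, sum_sub_distrib,
    sum_ite_eq', hS₀, hS₁, if_true]
  ring

theorem ValidProfile.update_movedRow (h : ValidProfile E c M r) {m : V} {S₀ S₁ : Finset V}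
    (hm : m ∈ M) (hS₀ : S₀ ∈ E) (hmS₀ : m ∈ S₀) (hS₁ : S₁ ∈ E) (hmS₁ : m ∈ S₁)
    (hne : S₀ ≠ S₁) :
    ValidProfile E c M (Function.update r m (movedRow r m S₀ S₁)) := by
  refine h.update (fun _ _ => Iff.rfl) (fun S => ?_) (fun S hS => ?_) (fun _ => ?_)
  · have := h.1 m S; have := h.1 m S₀
    unfold movedRow
    split_ifs with h₁ h₀ <;> subst_vars <;> first | exact absurd rfl hne | linarith
  · have h₀ : S ≠ S₀ := by rintro rfl; tauto
    have h₁ : S ≠ S₁ := by rintro rfl; tauto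
    simp [movedRow, h₀, h₁, h.2.1 m S hS]
  · have := sum_movedRow_mul r m (A := E.filter (fun S => m ∈ S)) (mem_filter.mpr ⟨hS₀, hmS₀⟩)
      (mem_filter.mpr ⟨hS₁, hmS₁⟩) fun _ => 1
    simpa [h.2.2 m hm] using this

theorem demand_update_movedRow_le (h : ValidProfile E c M r) (hd : 2 ≤ d) {m u : V}
    {S₀ S₁ : Finset V} (hsole : ∀ u ∈ S₁, u ∈ M → u = m) (huM : u ∈ M) (hum : u ≠ m) :
    demand d E M (Function.update r m (movedRow r m S₀ S₁)) u ≤ demand d E M r u := by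
  refine demand_le_demand hd fun x S huS => ?_
  rcases eq_or_ne x m with rfl | hxm
  · have hS : S ≠ S₁ := by rintro rfl; exact hum (hsole u huS huM)
    have := h.1 x S₀
    simp only [Function.update_self, movedRow, if_neg hS]
    split_ifs <;> linarith
  · rw [Function.update_of_ne hxm]

theorem IsNashEq.one_le_clubWeight (h : IsNashEq d E c T M r) (hd : 2 ≤ d)
    (hunif : ∀ S ∈ E, #S = d) (hc : ∀ u, 0 ≤ c u) {m : V} {S₀ S₁ : Finset V}
    (hS₁ : S₁ ∈ E) (hmS₁ : m ∈ S₁) (hsole : ∀ u ∈ S₁, u ∈ M → u = m) (hpos : 0 < r m S₀) :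
    1 ≤ clubWeight d E c M r m S₀ := by
  obtain ⟨hv, hnash⟩ := h
  obtain ⟨hm, hmS₀, hS₀⟩ := hv.mem_of_pos hpos
  have hW₁ : clubWeight d E c M r m S₁ = 1 := clubWeight_eq_one hd (hunif S₁ hS₁) hmS₁ hsole
  by_contra! hlt
  have hne : S₀ ≠ S₁ := by rintro rfl; exact hlt.ne hW₁
  set r' := Function.update r m (movedRow r m S₀ S₁)
  have hdev : Deviation m M M r r' := Deviation.update fun _ _ => Iff.rfl
  have hv' : ValidProfile E c M r' := hv.update_movedRow hm hS₀ hmS₀ hS₁ hmS₁ hne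
  have hincome : income d E c M r m < income d E c M r' m := calc
    income d E c M r m < income d E c M r m + r m S₀ * (clubWeight d E c M r m S₁
        - clubWeight d E c M r m S₀) := lt_add_of_pos_right _ (mul_pos hpos (by linarith))
    _ = ∑ S ∈ E.filter (fun S => m ∈ S), r' m S * clubWeight d E c M r m S := by
        rw [show r' m = movedRow r m S₀ S₁ from Function.update_self ..,
          sum_movedRow_mul r m (mem_filter.mpr ⟨hS₀, hmS₀⟩) (mem_filter.mpr ⟨hS₁, hmS₁⟩), income]
    _ ≤ income d E c M r' m := sum_le_sum fun S _ =>
        mul_le_mul_of_nonneg_left (clubWeight_le_clubWeight hd hc fun u _ hum huM =>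
          demand_update_movedRow_le hv hd hsole huM hum) (hv'.1 m S)
  have := hnash m M r' hv' hdev
  rw [utility_of_mem hm, utility_of_mem hm, hdev.demand_eq] at this
  linarith

theorem IsNashEq.cost_le_income (h : IsNashEq d E c T M r) {m : V} (hm : m ∈ M)
    (hunprot : demand d E M r m ≤ c m) (hcov : ∀ S ∈ E, m ∈ S → ∃ u ∈ S, u ∈ M ∧ u ≠ m) :
    c m ≤ income d E c M r m := by
  obtain ⟨hv, hnash⟩ := h
  have hdev : Deviation m M (M.erase m) r (Function.update r m 0) :=
    Deviation.update fun u hu => by simp [hu]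
  have hv' : ValidProfile E c (M.erase m) (Function.update r m 0) :=
    hv.update hdev.1 (fun _ => le_rfl) (fun _ _ => rfl) fun h => absurd h (notMem_erase m M)
  have hcovered : ¬∃ S ∈ E, m ∈ S ∧ M.erase m ∩ S = ∅ := by
    rintro ⟨S, hS, hmS, hempty⟩
    obtain ⟨u, huS, huM, hum⟩ := hcov S hS hmS
    exact eq_empty_iff_forall_notMem.mp hempty u (mem_inter.mpr ⟨mem_erase.mpr ⟨hum, huM⟩, huS⟩)
  have := hnash m _ _ hv' hdev
  rw [utility, if_neg (notMem_erase m M), if_neg hcovered, hdev.demand_eq, utility_of_mem hm,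
    min_eq_left hunprot] at this
  linarith

end

theorem stmt_13_general (d : ℕ) (hd : 2 ≤ d) (E : Finset (Finset V))
    (hunif : ∀ S ∈ E, S.card = d)
    (c : V → ℝ) (hc : ∀ v, 0 ≤ c v) (T : ℝ)
    (M : Finset V) (r : V → Finset V → ℝ)
    (hnash : IsNashEq d E c T M r) :
    ∀ v ∈ M, demand d E M r v ≤ c v := by
  by_contra! ⟨v, hvM, hv⟩
  obtain ⟨m, hm, S₀, hpos, u, huS₀, hum, huM, hu⟩ :=
    hnash.1.exists_unprotected_payer hd hunif hvM hv
  obtain ⟨hmM, hmS₀, hS₀⟩ := hnash.1.mem_of_pos hpos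
  have hW₀ : clubWeight d E c M r m S₀ < 1 :=
    clubWeight_lt_one hd hc (hunif S₀ hS₀) hmS₀ huS₀ hum huM hu
  by_cases hsole : ∃ S₁ ∈ E, m ∈ S₁ ∧ ∀ u ∈ S₁, u ∈ M → u = m
  · obtain ⟨S₁, hS₁, hmS₁, hsole⟩ := hsole
    exact hW₀.not_ge (hnash.one_le_clubWeight hd hunif hc hS₁ hmS₁ hsole hpos)
  · push Not at hsole
    exact (hnash.1.income_lt_cost hd hunif hc hpos hW₀).not_ge
      (hnash.cost_le_income hmM hm hsole)

/-- in any pure Nash equilibrium `(M, r)` of the Mafia Hitting Set Game there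
are no protected mafiosi, i.e. `D v ≤ c v` for every mafioso `v`. -/
theorem stmt_13 (d : ℕ) (hd : 2 ≤ d) (E : Finset (Finset V))
    (hunif : ∀ S ∈ E, S.card = d)
    (c : V → ℝ) (hc : ∀ v, 0 ≤ c v) (T : ℝ) (hT : 2 * ∑ v, c v < T)
    (M : Finset V) (r : V → Finset V → ℝ)
    (hnash : IsNashEq d E c T M r) :
    ∀ v ∈ M, demand d E M r v ≤ c v :=
  stmt_13_general d hd E hunif c hc T M r hnash

end
end MafiaHS
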